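/- Let |ψ⟩ ∈ A ⊗ B be a unit vector with reduced state ψ^A = tr_B(|ψ⟩⟨ψ|), and let ρ ∈ Pos(A) satisfy ρ ≤ ψ^A. Then there exists P ∈ Pos(B) with P ≤ I^B such that tr_B[(I ⊗ P)|ψ⟩⟨ψ|(I ⊗ P)] = ρ. -/

import Mathlib

/-!
Write `ψ` as the matrix `M i k = ψ (i, k)`, so that `ψ^A = M Mᴴ` and
`tr_B[(I ⊗ P)|ψ⟩⟨ψ|(I ⊗ P)] = M (P P)ᵀ Mᴴ`. Let `N` be the pseudoinverse of `σ = M Mᴴ`.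
Since `ρ ≤ σ`, `ker σ ⊆ ker ρ`, so `σ N ρ = ρ N σ = ρ`. Hence `X = Mᴴ N ρ N M` satisfies
`M X Mᴴ = ρ` and `0 ≤ X ≤ Mᴴ N σ N M = Mᴴ N M`, a projection, so `X ≤ 1`. Take `P = √(Xᵀ)`.
-/

open Matrix Kronecker
open scoped ComplexOrder

noncomputable def traceNorm {n m : Type*} [Fintype n] [Fintype m] [DecidableEq m]
    (M : Matrix n m ℂ) : ℝ :=
  (((Matrix.posSemidef_conjTranspose_mul_self M).1.eigenvectorUnitary.1 *
      Matrix.diagonal (((↑) : ℝ → ℂ) ∘ (Real.sqrt ∘ (Matrix.posSemidef_conjTranspose_mul_self M).1.eigenvalues)) *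
      (star (Matrix.posSemidef_conjTranspose_mul_self M).1.eigenvectorUnitary : Matrix m m ℂ)).trace).re

noncomputable def ptraceFst {a b : Type*} [Fintype a]
    (M : Matrix (a × b) (a × b) ℂ) : Matrix b b ℂ :=
  Matrix.of fun i j => ∑ k, M (k, i) (k, j)

noncomputable def ptraceSnd {a b : Type*} [Fintype b]
    (M : Matrix (a × b) (a × b) ℂ) : Matrix a a ℂ :=
  Matrix.of fun i j => ∑ k, M (i, k) (j, k)

open scoped MatrixOrder

lemma CFC.sqrt_le_one {A : Type*} [PartialOrder A] [Ring A] [StarRing A] [TopologicalSpace A]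
    [StarOrderedRing A] [Algebra ℝ A] [ContinuousFunctionalCalculus ℝ A IsSelfAdjoint]
    [NonnegSpectrumClass ℝ A] [IsSemitopologicalRing A] [T2Space A]
    {a : A} (h0 : 0 ≤ a) (h1 : a ≤ 1) : CFC.sqrt a ≤ 1 := by
  rw [CFC.sqrt_eq_real_sqrt a, cfcₙ_eq_cfc]
  exact cfc_le_one _ a fun x hx => Real.sqrt_le_one.mpr ((CFC.le_one_iff a).mp h1 x hx)

namespace Matrix

variable {𝕜 m n : Type*} [RCLike 𝕜]

lemma transpose_le_transpose_iff {X Y : Matrix n n 𝕜} : Xᵀ ≤ Yᵀ ↔ X ≤ Y := by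
  rw [le_iff, le_iff, ← transpose_sub, posSemidef_transpose_iff]

variable [Fintype m] [Fintype n]

lemma conjTranspose_mul_mul_le_conjTranspose_mul_mul {A B : Matrix m m 𝕜} (hAB : A ≤ B)
    (C : Matrix m n 𝕜) : Cᴴ * A * C ≤ Cᴴ * B * C := by
  simpa only [le_iff, Matrix.mul_sub, Matrix.sub_mul] using
    (le_iff.mp hAB).conjTranspose_mul_mul_same C

lemma mulVec_eq_zero_of_le_of_mulVec_eq_zero {ρ σ : Matrix n n 𝕜} (hρ : 0 ≤ ρ) (hρσ : ρ ≤ σ)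
    {v : n → 𝕜} (hv : σ *ᵥ v = 0) : ρ *ᵥ v = 0 := by
  rw [nonneg_iff_posSemidef] at hρ
  refine (hρ.dotProduct_mulVec_zero_iff v).mp (le_antisymm ?_ (hρ.dotProduct_mulVec_nonneg v))
  have := (le_iff.mp hρσ).dotProduct_mulVec_nonneg v
  rwa [sub_mulVec, hv, zero_sub, dotProduct_neg, neg_nonneg] at this

lemma mul_eq_zero_of_le_of_mul_eq_zero {ρ σ : Matrix n n 𝕜} (hρ : 0 ≤ ρ) (hρσ : ρ ≤ σ)
    {T : Matrix n m 𝕜} (hT : σ * T = 0) : ρ * T = 0 := by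
  refine ext_iff_mulVec.mpr fun v => ?_
  have hTv : σ *ᵥ (T *ᵥ v) = 0 := by rw [mulVec_mulVec, hT, zero_mulVec]
  rw [← mulVec_mulVec, mulVec_eq_zero_of_le_of_mulVec_eq_zero hρ hρσ hTv, zero_mulVec]

section PseudoInverse

/- Since `(0 : ℝ)⁻¹ = 0`, `cfc (·⁻¹ : ℝ → ℝ) A` is the Moore–Penrose pseudoinverse of a Hermitian
matrix `A`; `(·⁻¹)` is continuous on the spectrum because the spectrum is finite. -/

variable [DecidableEq n] {A : Matrix n n 𝕜}

lemma IsHermitian.mul_cfc_inv_mul (hA : A.IsHermitian) : A * cfc (·⁻¹ : ℝ → ℝ) A * A = A := by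
  have hinv := A.finite_real_spectrum.continuousOn (·⁻¹ : ℝ → ℝ)
  have h := cfc_mul (fun x : ℝ => x * x⁻¹) (fun x => x) A
  rw [cfc_mul (fun x : ℝ => x) (·⁻¹) A, cfc_id' ℝ A hA.isSelfAdjoint] at h
  simpa only [mul_inv_mul_cancel, cfc_id' ℝ A hA.isSelfAdjoint] using h.symm

lemma IsHermitian.cfc_inv_mul_mul_cfc_inv (hA : A.IsHermitian) :
    cfc (·⁻¹ : ℝ → ℝ) A * A * cfc (·⁻¹ : ℝ → ℝ) A = cfc (·⁻¹ : ℝ → ℝ) A := by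
  have hinv := A.finite_real_spectrum.continuousOn (·⁻¹ : ℝ → ℝ)
  have h := cfc_mul (fun x : ℝ => x⁻¹ * x) (·⁻¹) A
  rw [cfc_mul (·⁻¹) (fun x : ℝ => x) A, cfc_id' ℝ A hA.isSelfAdjoint] at h
  have hx (x : ℝ) : x⁻¹ * x * x⁻¹ = x⁻¹ := by simpa using mul_inv_mul_cancel x⁻¹
  simpa only [hx] using h.symm

end PseudoInverse

variable [DecidableEq m] [DecidableEq n]

lemma exists_nonneg_le_one_mul_mul_conjTranspose_eq {M : Matrix m n 𝕜} {ρ : Matrix m m 𝕜}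
    (hρ : 0 ≤ ρ) (hρσ : ρ ≤ M * Mᴴ) : ∃ X : Matrix n n 𝕜, 0 ≤ X ∧ X ≤ 1 ∧ M * X * Mᴴ = ρ := by
  set σ := M * Mᴴ
  have hσ : σ.IsHermitian := isHermitian_mul_conjTranspose_self M
  set N := cfc (·⁻¹ : ℝ → ℝ) σ
  have hN : Nᴴ = N := (cfc_predicate _ σ : IsSelfAdjoint N)
  have hρNσ : ρ * N * σ = ρ := by
    have hker : σ * (1 - N * σ) = 0 := by
      rw [Matrix.mul_sub, Matrix.mul_one, ← Matrix.mul_assoc, hσ.mul_cfc_inv_mul, sub_self]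
    have := mul_eq_zero_of_le_of_mul_eq_zero hρ hρσ hker
    rwa [Matrix.mul_sub, Matrix.mul_one, sub_eq_zero, eq_comm, ← Matrix.mul_assoc] at this
  have hσNρ : σ * N * ρ = ρ := by
    simpa only [conjTranspose_mul, hσ.eq, hN, (nonneg_iff_posSemidef.mp hρ).1.eq,
      Matrix.mul_assoc] using congrArg conjTranspose hρNσ
  have hNM : (N * M)ᴴ = Mᴴ * N := by rw [conjTranspose_mul, hN]
  have hNσN : Mᴴ * N * σ * N * M = Mᴴ * N * M := by
    rw [show Mᴴ * N * σ * N * M = Mᴴ * (N * σ * N) * M by simp only [Matrix.mul_assoc],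
      hσ.cfc_inv_mul_mul_cfc_inv]
  have hQ : IsStarProjection (Mᴴ * N * M) := by
    refine ⟨?_, ?_⟩
    · calc Mᴴ * N * M * (Mᴴ * N * M) = Mᴴ * N * σ * N * M := by simp only [σ, Matrix.mul_assoc]
        _ = Mᴴ * N * M := hNσN
    · rw [IsSelfAdjoint, star_eq_conjTranspose, conjTranspose_mul, conjTranspose_mul, hN,
        conjTranspose_conjTranspose, Matrix.mul_assoc]
  refine ⟨(N * M)ᴴ * ρ * (N * M), ?_, ?_, ?_⟩
  · simpa using conjTranspose_mul_mul_le_conjTranspose_mul_mul hρ (N * M)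
  · calc (N * M)ᴴ * ρ * (N * M) ≤ (N * M)ᴴ * σ * (N * M) :=
          conjTranspose_mul_mul_le_conjTranspose_mul_mul hρσ _
      _ = Mᴴ * N * M := by
          rw [hNM, ← hNσN]
          simp only [Matrix.mul_assoc]
      _ ≤ 1 := hQ.le_one
  · rw [hNM]
    calc M * (Mᴴ * N * ρ * (N * M)) * Mᴴ = σ * N * ρ * N * σ := by simp only [σ, Matrix.mul_assoc]
      _ = ρ := by rw [hσNρ, Matrix.mul_assoc, ← Matrix.mul_assoc ρ, hρNσ]

end Matrix

section
variable {a b : Type*} [Fintype b]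

lemma ptraceSnd_vecMulVec_vec (X : Matrix a b ℂ) (Y : Matrix b a ℂ) :
    ptraceSnd (vecMulVec (vec Xᵀ) (vec Y)) = X * Y := by
  ext i j
  simp [ptraceSnd, vecMulVec_apply, mul_apply]

lemma ptraceSnd_one_kronecker_mul_vecMulVec_mul [DecidableEq a] [Fintype a] (P : Matrix b b ℂ)
    (X : Matrix a b ℂ) (Y : Matrix b a ℂ) :
    ptraceSnd ((1 ⊗ₖ P) * vecMulVec (vec Xᵀ) (vec Y) * (1 ⊗ₖ P)) = X * (P * P)ᵀ * Y := by
  rw [mul_vecMulVec, vecMulVec_mul, kronecker_mulVec_vec, vec_vecMul_kronecker,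
    Matrix.mul_one, transpose_one, Matrix.mul_one, ← transpose_transpose (P * Xᵀ),
    ptraceSnd_vecMulVec_vec]
  simp only [transpose_mul, transpose_transpose, Matrix.mul_assoc]
end

theorem exists_measurement_op_ptrace_eq_general
    {a b : Type*} [Fintype a] [Fintype b] [DecidableEq a] [DecidableEq b]
    (ψ : EuclideanSpace ℂ (a × b))
    (ρ : Matrix a a ℂ) (hρ : ρ.PosSemidef)
    (hle : (ptraceSnd (Matrix.vecMulVec (fun p => ψ p) (fun p => (starRingEnd ℂ) (ψ p))) -
      ρ).PosSemidef) :
    ∃ P : Matrix b b ℂ, P.PosSemidef ∧ ((1 : Matrix b b ℂ) - P).PosSemidef ∧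
      ptraceSnd (((1 : Matrix a a ℂ) ⊗ₖ P) *
        Matrix.vecMulVec (fun p => ψ p) (fun p => (starRingEnd ℂ) (ψ p)) *
        ((1 : Matrix a a ℂ) ⊗ₖ P)) = ρ := by
  set M : Matrix a b ℂ := of fun i k => ψ (i, k)
  have hψ : (fun p => ψ p) = vec Mᵀ := rfl
  have hψ' : (fun p => (starRingEnd ℂ) (ψ p)) = vec Mᴴ := rfl
  rw [hψ, hψ', ptraceSnd_vecMulVec_vec] at hle
  obtain ⟨X, hX0, hX1, hMX⟩ := exists_nonneg_le_one_mul_mul_conjTranspose_eq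
    (nonneg_iff_posSemidef.mpr hρ) (le_iff.mpr hle)
  rw [← transpose_le_transpose_iff, transpose_zero] at hX0
  rw [← transpose_le_transpose_iff, transpose_one] at hX1
  refine ⟨CFC.sqrt Xᵀ, nonneg_iff_posSemidef.mp (CFC.sqrt_nonneg _),
    CFC.sqrt_le_one hX0 hX1, ?_⟩
  rw [hψ, hψ', ptraceSnd_one_kronecker_mul_vecMulVec_mul, CFC.sqrt_mul_sqrt_self Xᵀ,
    transpose_transpose, hMX]

/-- If `ρ ≤ ψ^A` then there is `0 ≤ P ≤ I` on `B` with
`tr_B[(I ⊗ P)|ψ⟩⟨ψ|(I ⊗ P)] = ρ`. -/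
theorem exists_measurement_op_ptrace_eq
    {a b : Type*} [Fintype a] [Fintype b] [DecidableEq a] [DecidableEq b]
    (ψ : EuclideanSpace ℂ (a × b)) (hψ : ‖ψ‖ = 1)
    (ρ : Matrix a a ℂ) (hρ : ρ.PosSemidef)
    (hle : (ptraceSnd (Matrix.vecMulVec (fun p => ψ p) (fun p => (starRingEnd ℂ) (ψ p))) -
      ρ).PosSemidef) :
    ∃ P : Matrix b b ℂ, P.PosSemidef ∧ ((1 : Matrix b b ℂ) - P).PosSemidef ∧
      ptraceSnd (((1 : Matrix a a ℂ) ⊗ₖ P) *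
        Matrix.vecMulVec (fun p => ψ p) (fun p => (starRingEnd ℂ) (ψ p)) *
        ((1 : Matrix a a ℂ) ⊗ₖ P)) = ρ :=
  exists_measurement_op_ptrace_eq_general ψ ρ hρ hle
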